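/- Let ε > 0, K ≥ 3 an integer, 1 ≤ d ≤ K − 1, y ∈ [K], and let S be drawn from the d-subset selection distribution with true label y. Let ζ_d = (d − γ_d)/(K − 1) where γ_d = d e^ε/(d e^ε + K − d). Then for any two distinct indices k, k' ∈ [K] \ {y}, the quantity θ := Pr[k ∈ S and k' ∈ S] − ζ_d² satisfies −ζ_d² ≤ θ ≤ 0. In particular θ does not depend on the choice of the pair k, k'. -/

import Mathlib

open Finset

/-- The `d`-subset selection randomizer with privacy parameter `ε` and true label `y`:
a `d`-element subset `A ⊆ [K]` gets probability `e^ε / D` if `y ∈ A` and `1 / D` otherwise,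
where `D = e^ε · C(K-1, d-1) + C(K-1, d)`. -/
noncomputable def dSubsetProb (ε : ℝ) (K d : ℕ) (y : Fin K) (A : Finset (Fin K)) : ℝ :=
  if A.card = d then
    (if y ∈ A then Real.exp ε else 1) /
      (Real.exp ε * (K - 1).choose (d - 1) + (K - 1).choose d)
  else 0

/-- `γ_d = d e^ε / (d e^ε + K - d)`, the probability that the true label is in the output. -/
noncomputable def gammaD (ε : ℝ) (K d : ℕ) : ℝ :=
  d * Real.exp ε / (d * Real.exp ε + K - d)

/-- `ζ_d = (d - γ_d)/(K - 1)`, the probability that any fixed other label is in the output. -/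
noncomputable def zetaD (ε : ℝ) (K d : ℕ) : ℝ :=
  (d - gammaD ε K d) / (K - 1)

/-!
Conditionally on `y ∈ S`, the set `S \ {y}` is a uniform `(d-1)`-subset of the `n = K - 1`
other labels, and otherwise `S` is a uniform `d`-subset of them; the first event has probability
`γ_d`. A uniform `m`-subset of an `n`-set contains a fixed pair with probability
`m(m-1)/(n(n-1))`, so `Pr[k, k' ∈ S] = (d-1)(d-2γ_d)/(n(n-1))`, which does not depend on the
pair, while `ζ_d = (d-γ_d)/n`. The bound `Pr[k, k' ∈ S] ≤ ζ_d²` is then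
`n(d-1)(d-2γ) ≤ (n-1)(d-γ)²`, and the difference of the two sides is
`(n-d)((d-1) + (1-γ)²) + (d-1)γ²`.
-/

lemma card_filter_powersetCard_subset_mul_choose {α : Type*} [DecidableEq α] {s t : Finset α}
    (hst : s ⊆ t) (m : ℕ) :
    #{A ∈ t.powersetCard m | s ⊆ A} * (#t).choose #s = (#t).choose m * m.choose #s := by
  rcases le_or_gt #s m with hsm | hms
  · rw [card_filter_powersetCard_subset s t m hst hsm, Nat.choose_mul hsm, mul_comm]
  · rw [Nat.choose_eq_zero_of_lt hms, mul_zero, card_eq_zero.2, zero_mul]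
    exact filter_eq_empty_iff.2 fun A hA hsA =>
      (card_le_card hsA).not_gt ((mem_powersetCard.1 hA).2.trans_lt hms)

lemma three_le_card_of_ne {α : Type*} [Fintype α] {a b c : α} (hab : a ≠ b) (hac : a ≠ c)
    (hbc : b ≠ c) : 3 ≤ Fintype.card α := by
  classical
  exact (card_eq_three.2 ⟨a, b, c, hab, hac, hbc, rfl⟩).symm.le.trans (card_le_univ _)

lemma dSubsetProb_nonneg (ε : ℝ) (K d : ℕ) (y : Fin K) (A : Finset (Fin K)) :
    0 ≤ dSubsetProb ε K d y A := by
  unfold dSubsetProb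
  split_ifs <;> positivity

lemma gammaD_eq (ε : ℝ) {K d : ℕ} (hd1 : 1 ≤ d) (hd2 : d ≤ K - 1) :
    gammaD ε K d = Real.exp ε * (K - 1).choose (d - 1)
      / (Real.exp ε * (K - 1).choose (d - 1) + (K - 1).choose d) := by
  obtain ⟨e, rfl⟩ : ∃ e, d = e + 1 := ⟨d - 1, by omega⟩
  have hrec : ((K - 1).choose (e + 1) : ℝ) * (e + 1) = (K - 1).choose e * ((K : ℝ) - (e + 1)) := by
    have := Nat.choose_succ_right_eq (K - 1) e
    rw [show K - 1 - e = K - (e + 1) by omega] at this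
    have hle : e + 1 ≤ K := by omega
    exact_mod_cast this
  have hpos : (0 : ℝ) < (K - 1).choose e := by exact_mod_cast Nat.choose_pos (by omega)
  have hK : (e : ℝ) + 2 ≤ K := by exact_mod_cast (by omega : e + 2 ≤ K)
  have ha := Real.exp_pos ε
  unfold gammaD
  rw [Nat.add_sub_cancel, div_eq_div_iff (by push_cast; nlinarith) (by positivity)]
  push_cast
  linear_combination Real.exp ε * hrec

lemma sum_pair_dSubsetProb (ε : ℝ) {K d : ℕ} (hd1 : 1 ≤ d) {y k k' : Fin K} (hk : k ≠ y)
    (hk' : k' ≠ y) :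
    ∑ A : Finset (Fin K), (if k ∈ A ∧ k' ∈ A then dSubsetProb ε K d y A else 0)
      = (Real.exp ε * #{B ∈ (univ.erase y).powersetCard (d - 1) | {k, k'} ⊆ B}
          + #{B ∈ (univ.erase y).powersetCard d | {k, k'} ⊆ B})
        / (Real.exp ε * (K - 1).choose (d - 1) + (K - 1).choose d) := by
  set D := Real.exp ε * (K - 1).choose (d - 1) + (K - 1).choose d with hD
  have hsplit : (univ : Finset (Finset (Fin K))) = (insert y (univ.erase y)).powerset := by
    rw [insert_erase (mem_univ y), powerset_univ]
  have hout : ∀ B ∈ (univ.erase y).powerset,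
      (if k ∈ B ∧ k' ∈ B then dSubsetProb ε K d y B else 0)
        = if #B = d ∧ {k, k'} ⊆ B then 1 / D else 0 := by
    intro B hB
    have hyB : y ∉ B := fun h => by simpa using mem_powerset.1 hB h
    simp only [dSubsetProb, ← hD, insert_subset_iff, singleton_subset_iff, hyB, if_false]
    split_ifs <;> simp_all
  have hin : ∀ B ∈ (univ.erase y).powerset,
      (if k ∈ insert y B ∧ k' ∈ insert y B then dSubsetProb ε K d y (insert y B) else 0)
        = if #B = d - 1 ∧ {k, k'} ⊆ B then Real.exp ε / D else 0 := by
    intro B hB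
    have hyB : y ∉ B := fun h => by simpa using mem_powerset.1 hB h
    simp only [dSubsetProb, ← hD, insert_subset_iff, singleton_subset_iff, mem_insert, hk, hk',
      false_or, true_or, if_true, card_insert_of_notMem hyB, show #B + 1 = d ↔ #B = d - 1 by omega]
    split_ifs <;> simp_all
  have hcount : ∀ m, #{B ∈ (univ.erase y).powerset | #B = m ∧ {k, k'} ⊆ B}
      = #{B ∈ (univ.erase y).powersetCard m | {k, k'} ⊆ B} := by
    intro m
    rw [powersetCard_eq_filter, filter_filter]
  rw [hsplit, sum_powerset_insert (notMem_erase y univ), sum_congr rfl hout, sum_congr rfl hin,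
    ← sum_filter, ← sum_filter, sum_const, sum_const, hcount, hcount, nsmul_eq_mul, nsmul_eq_mul]
  ring

lemma sum_pair_dSubsetProb_eq (ε : ℝ) {K d : ℕ} (hd1 : 1 ≤ d) (hd2 : d ≤ K - 1) {y k k' : Fin K}
    (hk : k ≠ y) (hk' : k' ≠ y) (hkk' : k ≠ k') :
    ∑ A : Finset (Fin K), (if k ∈ A ∧ k' ∈ A then dSubsetProb ε K d y A else 0)
      = (d - 1) * (d - 2 * gammaD ε K d) / ((K - 1) * (K - 2)) := by
  have hK : 3 ≤ K := by simpa using three_le_card_of_ne hk.symm hk'.symm hkk'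
  have hsub : {k, k'} ⊆ univ.erase y := by simp [insert_subset_iff, hk, hk']
  have hT : #(univ.erase y) = K - 1 := by simp [card_erase_of_mem]
  have hcount := fun m => card_filter_powersetCard_subset_mul_choose hsub m
  simp only [hT, card_pair hkk'] at hcount
  have h0 := congrArg (Nat.cast : ℕ → ℝ) (hcount (d - 1))
  have h1 := congrArg (Nat.cast : ℕ → ℝ) (hcount d)
  push_cast [Nat.cast_choose_two, Nat.cast_sub hd1, Nat.cast_sub (by omega : 1 ≤ K)] at h0 h1
  rw [sum_pair_dSubsetProb ε hd1 hk hk', gammaD_eq ε hd1 hd2]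
  have hc0 : (0 : ℝ) < (K - 1).choose (d - 1) := by exact_mod_cast Nat.choose_pos (by omega)
  have hK' : (3 : ℝ) ≤ K := by exact_mod_cast hK
  have hQ : ((K : ℝ) - 1) * (K - 2) ≠ 0 := by nlinarith
  have hD : Real.exp ε * (K - 1).choose (d - 1) + ((K - 1).choose d : ℝ) ≠ 0 := by positivity
  field_simp
  rw [eq_div_iff hQ]
  linear_combination 2 * Real.exp ε * h0 + 2 * h1

lemma mul_sub_one_mul_sub_two_mul_le {n d p : ℝ} (hd : 1 ≤ d) (hdn : d ≤ n) :
    n * ((d - 1) * (d - 2 * p)) ≤ (n - 1) * (d - p) ^ 2 := by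
  nlinarith [mul_nonneg (sub_nonneg.2 hdn) (add_nonneg (sub_nonneg.2 hd) (sq_nonneg (1 - p))),
    mul_nonneg (sq_nonneg p) (sub_nonneg.2 hd)]

lemma sum_pair_dSubsetProb_le_zetaD_sq (ε : ℝ) {K d : ℕ} (hd1 : 1 ≤ d) (hd2 : d ≤ K - 1)
    {y k k' : Fin K} (hk : k ≠ y) (hk' : k' ≠ y) (hkk' : k ≠ k') :
    ∑ A : Finset (Fin K), (if k ∈ A ∧ k' ∈ A then dSubsetProb ε K d y A else 0)
      ≤ zetaD ε K d ^ 2 := by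
  have hK : 3 ≤ K := by simpa using three_le_card_of_ne hk.symm hk'.symm hkk'
  have hK' : (3 : ℝ) ≤ K := by exact_mod_cast hK
  have hdK : (d : ℝ) ≤ K - 1 := by
    rw [le_sub_iff_add_le]; exact_mod_cast (by omega : d + 1 ≤ K)
  have key := mul_sub_one_mul_sub_two_mul_le (p := gammaD ε K d) (by exact_mod_cast hd1) hdK
  rw [sum_pair_dSubsetProb_eq ε hd1 hd2 hk hk' hkk', zetaD, div_pow,
    div_le_div_iff₀ (by nlinarith) (by nlinarith)]
  linarith [mul_le_mul_of_nonneg_left key (by linarith : (0 : ℝ) ≤ K - 1)]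

theorem stmt_13_general (ε : ℝ) (K : ℕ) (d : ℕ)
    (hd1 : 1 ≤ d) (hd2 : d ≤ K - 1) (y : Fin K) :
    (∀ k k' : Fin K, k ≠ y → k' ≠ y → k ≠ k' →
      -(zetaD ε K d) ^ 2 ≤
          (∑ A : Finset (Fin K),
            (if k ∈ A ∧ k' ∈ A then dSubsetProb ε K d y A else 0)) - (zetaD ε K d) ^ 2 ∧
        (∑ A : Finset (Fin K),
            (if k ∈ A ∧ k' ∈ A then dSubsetProb ε K d y A else 0)) - (zetaD ε K d) ^ 2
          ≤ 0) ∧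
    (∀ k k' l l' : Fin K, k ≠ y → k' ≠ y → k ≠ k' → l ≠ y → l' ≠ y → l ≠ l' →
      (∑ A : Finset (Fin K),
          (if k ∈ A ∧ k' ∈ A then dSubsetProb ε K d y A else 0))
        = ∑ A : Finset (Fin K),
            (if l ∈ A ∧ l' ∈ A then dSubsetProb ε K d y A else 0)) := by
  refine ⟨fun k k' hk hk' hkk' => ⟨?_, ?_⟩, fun k k' l l' hk hk' hkk' hl hl' hll' => ?_⟩
  · have hnonneg : 0 ≤ ∑ A : Finset (Fin K),
        (if k ∈ A ∧ k' ∈ A then dSubsetProb ε K d y A else 0) :=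
      sum_nonneg fun A _ => ite_nonneg (dSubsetProb_nonneg ε K d y A) le_rfl
    linarith
  · exact sub_nonpos.2 (sum_pair_dSubsetProb_le_zetaD_sq ε hd1 hd2 hk hk' hkk')
  · rw [sum_pair_dSubsetProb_eq ε hd1 hd2 hk hk' hkk',
      sum_pair_dSubsetProb_eq ε hd1 hd2 hl hl' hll']

theorem stmt_13 (ε : ℝ) (hε : 0 < ε) (K : ℕ) (hK : 3 ≤ K) (d : ℕ)
    (hd1 : 1 ≤ d) (hd2 : d ≤ K - 1) (y : Fin K) :
    (∀ k k' : Fin K, k ≠ y → k' ≠ y → k ≠ k' →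
      -(zetaD ε K d) ^ 2 ≤
          (∑ A : Finset (Fin K),
            (if k ∈ A ∧ k' ∈ A then dSubsetProb ε K d y A else 0)) - (zetaD ε K d) ^ 2 ∧
        (∑ A : Finset (Fin K),
            (if k ∈ A ∧ k' ∈ A then dSubsetProb ε K d y A else 0)) - (zetaD ε K d) ^ 2
          ≤ 0) ∧
    (∀ k k' l l' : Fin K, k ≠ y → k' ≠ y → k ≠ k' → l ≠ y → l' ≠ y → l ≠ l' →
      (∑ A : Finset (Fin K),
          (if k ∈ A ∧ k' ∈ A then dSubsetProb ε K d y A else 0))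
        = ∑ A : Finset (Fin K),
            (if l ∈ A ∧ l' ∈ A then dSubsetProb ε K d y A else 0)) :=
  stmt_13_general ε K d hd1 hd2 y
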